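/- For every integer n ≥ 2, there exist connected graphs G with connected complement \bar{G} such that the geodetic hull number of the complementary prism satisfies h(G\bar{G}) = n. In particular, for n ≥ 3 the graph G obtained from the complete graph K_n on vertices u_1,...,u_n by adding two pendant vertices v_1 adjacent to u_1 and v_2 adjacent to u_2 satisfies: G and \bar{G} are connected and h(G\bar{G}) = n. -/

import Mathlib

open SimpleGraph

/-- The geodetic closed interval `I[u,v]`: `u`, `v`, and all vertices lying on
some shortest `u`–`v` path. -/
def geoInterval {V : Type*} (G : SimpleGraph V) (u v : V) : Set V :=
  {w | w = u ∨ w = v ∨ (G.Reachable u v ∧ G.dist u w + G.dist w v = G.dist u v)}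

/-- A set is geodetically convex if it is closed under intervals. -/
def IsGeoConvex {V : Type*} (G : SimpleGraph V) (S : Set V) : Prop :=
  ∀ u ∈ S, ∀ v ∈ S, geoInterval G u v ⊆ S

/-- The geodetic convex hull: the smallest convex set containing `S`. -/
def geoHull {V : Type*} (G : SimpleGraph V) (S : Set V) : Set V :=
  ⋂₀ {T | IsGeoConvex G T ∧ S ⊆ T}

/-- `S` is a hull set if its convex hull is the whole vertex set. -/
def IsHullSet {V : Type*} (G : SimpleGraph V) (S : Set V) : Prop :=
  geoHull G S = Set.univ

/-- The geodetic hull number: minimum cardinality of a hull set. -/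
noncomputable def hullNumber {V : Type*} (G : SimpleGraph V) : ℕ :=
  sInf {n | ∃ S : Set V, S.ncard = n ∧ IsHullSet G S}

/-- A vertex is simplicial if its closed neighborhood induces a clique. -/
def IsSimplicial {V : Type*} (G : SimpleGraph V) (v : V) : Prop :=
  ∀ a ∈ G.neighborSet v, ∀ b ∈ G.neighborSet v, a ≠ b → G.Adj a b

/-- The complementary prism `G G̅`: disjoint union of `G` (left copies) and its
complement (right copies), plus a perfect matching between corresponding vertices. -/
def compPrism {V : Type*} (G : SimpleGraph V) : SimpleGraph (V ⊕ V) where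
  Adj x y :=
    match x, y with
    | .inl u, .inl w => G.Adj u w
    | .inr u, .inr w => u ≠ w ∧ ¬ G.Adj u w
    | .inl u, .inr w => u = w
    | .inr u, .inl w => u = w
  symm := by
    constructor
    rintro (u | u) (w | w) h
    · exact h.symm
    · exact h.symm
    · exact h.symm
    · exact ⟨h.1.symm, fun a => h.2 a.symm⟩
  loopless := by
    constructor
    rintro (u | u) h
    · exact G.loopless.irrefl u h
    · exact h.1 rfl

/-- The complete graph `K_n` with two pendant vertices attached:
`Sum.inr 0` is adjacent only to `Sum.inl 0`, and `Sum.inr 1` only to `Sum.inl 1`. -/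
def pendantGraph (n : ℕ) : SimpleGraph (Fin n ⊕ Fin 2) where
  Adj x y :=
    match x, y with
    | .inl u, .inl w => u ≠ w
    | .inl u, .inr i => (u : ℕ) = (i : ℕ)
    | .inr i, .inl u => (u : ℕ) = (i : ℕ)
    | .inr _, .inr _ => False
  symm := by
    constructor
    rintro (u | i) (w | j) h
    · exact h.symm
    · exact h
    · exact h
    · exact h.elim
  loopless := by
    constructor
    rintro (u | i) h
    · exact h rfl
    · exact h

/-!
Write `u i`, `v k` for the vertices of `G` and `ū i`, `v̄ k` for their copies in `Ḡ`.
The vertices `v 0` and `v 1` are at distance `3`, and the geodesics `v 0, u 0, u 1, v 1` and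
`v 0, v̄ 0, v̄ 1, v 1` put `u 0, u 1, v̄ 0, v̄ 1` into the hull of `{v 0, v 1, u 2, …, u (n-1)}`;
then every `ū i` lies on a geodesic `u i, ū i, v̄ k` with `k ≠ i`, so this set of size `n` is a
hull set. Conversely, the `n` fibres `{u i, ū i, v i}` are pairwise disjoint and each has a
convex complement, because the graph has diameter `3`, every `u j` and `v̄ k` has eccentricity
at most `2`, and the neighbours of a fibre vertex outside the fibre form a clique of such
vertices. A hull set therefore meets every fibre.
-/

section Metric

variable {V : Type*} {G : SimpleGraph V}

lemma dist_le_one_of_adj_or_eq {x y : V} (h : G.Adj x y ∨ x = y) : G.dist x y ≤ 1 := by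
  rcases h with h | rfl
  · simpa using dist_le h.toWalk
  · simp

lemma dist_le_two_of_adj_or_eq (hG : G.Connected) {x y : V} (z : V)
    (hxz : G.Adj x z ∨ x = z) (hzy : G.Adj z y ∨ z = y) : G.dist x y ≤ 2 :=
  hG.dist_triangle.trans
    (add_le_add (dist_le_one_of_adj_or_eq hxz) (dist_le_one_of_adj_or_eq hzy))

end Metric

section Geodetic

variable {V : Type*} {G : SimpleGraph V}

lemma subset_geoHull (S : Set V) : S ⊆ geoHull G S :=
  fun _ hx => Set.mem_sInter.mpr fun _ hT => hT.2 hx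

lemma geoHull_subset {S T : Set V} (hT : IsGeoConvex G T) (hST : S ⊆ T) : geoHull G S ⊆ T :=
  Set.sInter_subset_of_mem ⟨hT, hST⟩

lemma isGeoConvex_geoHull (S : Set V) : IsGeoConvex G (geoHull G S) :=
  fun u hu v hv _ hw => Set.mem_sInter.mpr fun T hT =>
    hT.1 u (Set.mem_sInter.mp hu T hT) v (Set.mem_sInter.mp hv T hT) hw

lemma IsHullSet.inter_nonempty {S C : Set V} (hS : IsHullSet G S) (hC : IsGeoConvex G Cᶜ)
    (hne : C.Nonempty) : (S ∩ C).Nonempty := by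
  by_contra h
  obtain ⟨c, hc⟩ := hne
  have hsub : geoHull G S ⊆ Cᶜ := geoHull_subset hC fun x hx hxC => h ⟨x, hx, hxC⟩
  exact hsub (hS ▸ Set.mem_univ c) hc

lemma IsHullSet.ncard_le [Finite V] {β : Type*} {f : V → β} {T : Set β} {S : Set V}
    (hS : IsHullSet G S) (hT : ∀ b ∈ T, (f ⁻¹' {b}).Nonempty ∧ IsGeoConvex G (f ⁻¹' {b})ᶜ) :
    T.ncard ≤ S.ncard := by
  have hTS : T ⊆ f '' S := fun b hb => hS.inter_nonempty (hT b hb).2 (hT b hb).1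
  exact (Set.ncard_le_ncard hTS (Set.toFinite _)).trans (Set.ncard_image_le (Set.toFinite S))

lemma hullNumber_eq_of_isHullSet {S : Set V} {m : ℕ} (hS : IsHullSet G S) (hcard : S.ncard = m)
    (hmin : ∀ T, IsHullSet G T → m ≤ T.ncard) : hullNumber G = m :=
  le_antisymm (Nat.sInf_le ⟨S, hcard, hS⟩)
    (le_csInf ⟨m, S, hcard, hS⟩ fun _ ⟨T, hT, hTh⟩ => hT ▸ hmin T hTh)

lemma mem_geoInterval_of_dist_le (hG : G.Connected) {a b w : V} {p q : ℕ}
    (ha : G.dist a w ≤ p) (hb : G.dist w b ≤ q) (hab : p + q ≤ G.dist a b) :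
    w ∈ geoInterval G a b :=
  Or.inr <| Or.inr ⟨hG a b, le_antisymm (by omega) hG.dist_triangle⟩

lemma mem_geoInterval_of_adj_adj (hG : G.Connected) {a b w : V} (ha : G.Adj a w)
    (hb : G.Adj w b) (hab : 2 ≤ G.dist a b) : w ∈ geoInterval G a b :=
  mem_geoInterval_of_dist_le hG (dist_le ha.toWalk) (dist_le hb.toWalk) hab

lemma mem_geoInterval_of_adj_adj_adj (hG : G.Connected) {a b x y : V} (hax : G.Adj a x)
    (hxy : G.Adj x y) (hyb : G.Adj y b) (hab : 3 ≤ G.dist a b) :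
    x ∈ geoInterval G a b ∧ y ∈ geoInterval G a b :=
  ⟨mem_geoInterval_of_dist_le hG (dist_le hax.toWalk) (dist_le (.cons hxy hyb.toWalk)) hab,
    mem_geoInterval_of_dist_le hG (dist_le (.cons hax hxy.toWalk)) (dist_le hyb.toWalk) hab⟩

/-- A vertex of `C` inside a geodesic between two vertices `u, v ∉ C` would force
`d(u, v) ≥ 4` if it is adjacent to neither, `d(u, v) ≥ 3` if it is adjacent to exactly one,
and `d(u, v) = 2` if it is adjacent to both. -/
lemma isGeoConvex_compl (hG : G.Connected) {C : Set V} (hdiam : ∀ x y, G.dist x y ≤ 3)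
    (hecc : ∀ w ∈ C, ∀ x ∉ C, G.Adj w x → ∀ y, G.dist x y ≤ 2)
    (hclique : ∀ w ∈ C, ∀ x ∉ C, ∀ y ∉ C, G.Adj w x → G.Adj w y → G.dist x y ≤ 1) :
    IsGeoConvex G Cᶜ := by
  intro u hu v hv w hw
  by_contra hwC
  rw [Set.notMem_compl_iff] at hwC
  have hne : ∀ x ∉ C, w ≠ x := fun x hx hwx => hx (hwx ▸ hwC)
  rcases hw with rfl | rfl | ⟨-, hsum⟩
  · exact hu hwC
  · exact hv hwC
  have hdist : ∀ x ∉ C, G.Adj w x ∨ 2 ≤ G.dist w x := fun x hx =>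
    (em _).imp_right (hG.one_lt_dist_of_ne_of_not_adj (hne x hx))
  rw [dist_comm] at hsum
  have h1u := hG.pos_dist_of_ne (hne u hu)
  have h1v := hG.pos_dist_of_ne (hne v hv)
  rcases hdist u hu with hwu | h2u <;> rcases hdist v hv with hwv | h2v
  · have := hclique w hwC u hu v hv hwu hwv
    omega
  · have := hecc w hwC u hu hwu v
    omega
  · have := hecc w hwC v hv hwv u
    rw [dist_comm] at this
    omega
  · have := hdiam u v
    omega

end Geodetic

section CompPrism

variable {V : Type*} {G : SimpleGraph V} {a b : V}

@[simp] lemma compPrism_adj_inl_inl : (compPrism G).Adj (.inl a) (.inl b) ↔ G.Adj a b := Iff.rfl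
@[simp] lemma compPrism_adj_inr_inr :
    (compPrism G).Adj (.inr a) (.inr b) ↔ a ≠ b ∧ ¬ G.Adj a b := Iff.rfl
@[simp] lemma compPrism_adj_inl_inr : (compPrism G).Adj (.inl a) (.inr b) ↔ a = b := Iff.rfl
@[simp] lemma compPrism_adj_inr_inl : (compPrism G).Adj (.inr a) (.inl b) ↔ a = b := Iff.rfl

lemma compPrism_connected (hG : G.Connected) : (compPrism G).Connected := by
  let ι : G →g compPrism G := ⟨Sum.inl, id⟩
  have hleft : ∀ x, (compPrism G).Reachable (.inl hG.nonempty.some) x := by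
    rintro (x | x)
    · exact (hG _ x).map ι
    · exact (hG _ x).map ι |>.trans (compPrism_adj_inl_inr.mpr rfl).reachable
  exact (connected_iff_exists_forall_reachable _).mpr ⟨_, hleft⟩

end CompPrism

namespace PendantGraph

variable {n : ℕ} {i j : Fin n} {k l : Fin 2}

@[simp] lemma adj_inl_inl : (pendantGraph n).Adj (.inl i) (.inl j) ↔ i ≠ j := Iff.rfl
@[simp] lemma adj_inl_inr : (pendantGraph n).Adj (.inl i) (.inr k) ↔ (i : ℕ) = k := Iff.rfl
@[simp] lemma adj_inr_inl : (pendantGraph n).Adj (.inr k) (.inl i) ↔ (i : ℕ) = k := Iff.rfl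
@[simp] lemma not_adj_inr_inr : ¬ (pendantGraph n).Adj (.inr k) (.inr l) := id

lemma connected (hn : 2 ≤ n) : (pendantGraph n).Connected := by
  have hu : ∀ i j : Fin n, (pendantGraph n).Reachable (.inl i) (.inl j) := fun i j => by
    rcases eq_or_ne i j with rfl | hij
    exacts [.rfl, (adj_inl_inl.mpr hij).reachable]
  refine (connected_iff_exists_forall_reachable _).mpr ⟨.inl ⟨0, by omega⟩, ?_⟩
  rintro (j | k)
  · exact hu _ j
  · exact (hu _ (Fin.castLE hn k)).trans (adj_inl_inr.mpr (by simp)).reachable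

lemma compl_connected : (pendantGraph n)ᶜ.Connected := by
  have h01 : (pendantGraph n)ᶜ.Adj (.inr 0) (.inr 1) := by simp [compl_adj]
  refine (connected_iff_exists_forall_reachable _).mpr ⟨.inr 0, ?_⟩
  rintro (i | k)
  · by_cases hi : (i : ℕ) = 0
    · exact h01.reachable.trans (Adj.reachable (by simp [compl_adj, hi]))
    · exact Adj.reachable (by simp [compl_adj, hi])
  · fin_cases k
    exacts [.rfl, h01.reachable]

end PendantGraph

namespace PendantPrism

variable {n : ℕ}

/-- `u i` is the paper's `u_{i+1}` and `v k` its `v_{k+1}`; `uBar`, `vBar` are their copies in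
the complement. -/
abbrev u (i : Fin n) : (Fin n ⊕ Fin 2) ⊕ (Fin n ⊕ Fin 2) := .inl (.inl i)
abbrev v (k : Fin 2) : (Fin n ⊕ Fin 2) ⊕ (Fin n ⊕ Fin 2) := .inl (.inr k)
abbrev uBar (i : Fin n) : (Fin n ⊕ Fin 2) ⊕ (Fin n ⊕ Fin 2) := .inr (.inl i)
abbrev vBar (k : Fin 2) : (Fin n ⊕ Fin 2) ⊕ (Fin n ⊕ Fin 2) := .inr (.inr k)

lemma connected (hn : 2 ≤ n) : (compPrism (pendantGraph n)).Connected :=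
  compPrism_connected (PendantGraph.connected hn)

lemma dist_u_le_two (hn : 2 ≤ n) (i : Fin n) (y : (Fin n ⊕ Fin 2) ⊕ (Fin n ⊕ Fin 2)) :
    (compPrism (pendantGraph n)).dist (u i) y ≤ 2 := by
  have hG := connected hn
  rcases y with (j | k) | (j | k)
  · exact dist_le_two_of_adj_or_eq hG (u j) (by simp [ne_or_eq]) (by simp)
  · exact dist_le_two_of_adj_or_eq hG (u (Fin.castLE hn k)) (by simp [ne_or_eq]) (by simp)
  · exact dist_le_two_of_adj_or_eq hG (u j) (by simp [ne_or_eq]) (by simp)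
  · by_cases hik : (i : ℕ) = k
    · exact dist_le_two_of_adj_or_eq hG (v k) (by simp [hik]) (by simp)
    · exact dist_le_two_of_adj_or_eq hG (uBar i) (by simp) (by simp [hik])

lemma dist_vBar_le_two (hn : 2 ≤ n) (k : Fin 2) (y : (Fin n ⊕ Fin 2) ⊕ (Fin n ⊕ Fin 2)) :
    (compPrism (pendantGraph n)).dist (vBar k) y ≤ 2 := by
  have hG := connected hn
  rcases y with (j | l) | (j | l)
  · by_cases hjk : (j : ℕ) = k
    · exact dist_le_two_of_adj_or_eq hG (v k) (by simp) (by simp [hjk])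
    · exact dist_le_two_of_adj_or_eq hG (uBar j) (by simp [hjk]) (by simp)
  · exact dist_le_two_of_adj_or_eq hG (vBar l) (by simp [ne_or_eq]) (by simp)
  · by_cases hjk : (j : ℕ) = k
    · exact dist_le_two_of_adj_or_eq hG (vBar (1 - k)) (by fin_cases k <;> simp)
        (by fin_cases k <;> simp [hjk])
    · exact dist_le_two_of_adj_or_eq hG (uBar j) (by simp [hjk]) (by simp)
  · exact dist_le_two_of_adj_or_eq hG (vBar l) (by simp [ne_or_eq]) (by simp)

lemma dist_le_three (hn : 2 ≤ n) (x y : (Fin n ⊕ Fin 2) ⊕ (Fin n ⊕ Fin 2)) :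
    (compPrism (pendantGraph n)).dist x y ≤ 3 := by
  have hG := connected hn
  rcases x with (i | k) | (i | k)
  · exact (dist_u_le_two hn i y).trans (by norm_num)
  · calc _ ≤ _ := hG.dist_triangle
      _ ≤ 1 + 2 := add_le_add (dist_le_one_of_adj_or_eq (y := u (Fin.castLE hn k)) (by simp))
        (dist_u_le_two hn _ y)
  · calc _ ≤ _ := hG.dist_triangle
      _ ≤ 1 + 2 := add_le_add (dist_le_one_of_adj_or_eq (y := u i) (by simp))
        (dist_u_le_two hn i y)
  · exact (dist_vBar_le_two hn k y).trans (by norm_num)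

/-- Fibre `i` is `{u i, uBar i}`, together with `v i` when `i < 2`; no `vBar k` lies in a
fibre. -/
def fiberIndex : (Fin n ⊕ Fin 2) ⊕ (Fin n ⊕ Fin 2) → Option ℕ
  | .inl (.inl i) => some i
  | .inl (.inr k) => some k
  | .inr (.inl i) => some i
  | .inr (.inr _) => none

variable {i : ℕ} {w x y : (Fin n ⊕ Fin 2) ⊕ (Fin n ⊕ Fin 2)}

lemma exists_eq_u_or_vBar_of_adj_fiber (hw : fiberIndex w = some i)
    (hx : fiberIndex x ≠ some i) (hwx : (compPrism (pendantGraph n)).Adj w x) :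
    (∃ j, x = u j) ∨ ∃ k, x = vBar k := by
  rcases w with (i' | k) | (i' | k) <;> rcases x with (j | l) | (j | l) <;>
    simp_all [fiberIndex]

/-- The neighbours of a fibre vertex outside its fibre are either all `u j` or all `vBar k`. -/
lemma adj_or_eq_of_adj_fiber (hw : fiberIndex w = some i)
    (hx : fiberIndex x ≠ some i) (hy : fiberIndex y ≠ some i)
    (hwx : (compPrism (pendantGraph n)).Adj w x) (hwy : (compPrism (pendantGraph n)).Adj w y) :
    (compPrism (pendantGraph n)).Adj x y ∨ x = y := by
  rcases w with (i' | k) | (i' | k) <;> rcases x with (j | l) | (j | l) <;>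
    rcases y with (j' | l') | (j' | l') <;> simp_all [fiberIndex] <;> exact ne_or_eq _ _

lemma isGeoConvex_compl_fiber (hn : 2 ≤ n) (i : ℕ) :
    IsGeoConvex (compPrism (pendantGraph n)) (fiberIndex ⁻¹' {some i})ᶜ := by
  refine isGeoConvex_compl (connected hn) (dist_le_three hn) ?_ ?_
  · intro w hw x hx hwx y
    rcases exists_eq_u_or_vBar_of_adj_fiber hw hx hwx with ⟨j, rfl⟩ | ⟨k, rfl⟩
    exacts [dist_u_le_two hn j y, dist_vBar_le_two hn k y]
  · exact fun w hw x hx y hy hwx hwy =>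
      dist_le_one_of_adj_or_eq (adj_or_eq_of_adj_fiber hw hx hy hwx hwy)

lemma three_le_dist_v_v (hn : 2 ≤ n) : 3 ≤ (compPrism (pendantGraph n)).dist (v 0) (v 1) := by
  have hr := connected hn (v 0) (v 1)
  have h : 2 < (compPrism (pendantGraph n)).edist (v 0) (v 1) := by
    refine two_lt_edist_iff.mpr ⟨by simp, by simp, ?_⟩
    ext ((j | l) | (j | l)) <;> simp [mem_commonNeighbors] <;> omega
  rw [← hr.coe_dist_eq_edist] at h
  exact_mod_cast h

def hullVertex (i : Fin n) : (Fin n ⊕ Fin 2) ⊕ (Fin n ⊕ Fin 2) :=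
  if h : (i : ℕ) < 2 then v ⟨i, h⟩ else u i

lemma fiberIndex_hullVertex (i : Fin n) : fiberIndex (hullVertex i) = some (i : ℕ) := by
  unfold hullVertex; split_ifs <;> rfl

lemma ncard_range_hullVertex : (Set.range (hullVertex (n := n))).ncard = n := by
  rw [Set.ncard_range_of_injective, Nat.card_fin]
  exact fun i j h => Fin.ext (Option.some_injective _ (by
    simpa only [fiberIndex_hullVertex] using congrArg fiberIndex h))

lemma isHullSet_range_hullVertex (hn : 2 ≤ n) :
    IsHullSet (compPrism (pendantGraph n)) (Set.range hullVertex) := by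
  have hG := connected hn
  set hull := geoHull (compPrism (pendantGraph n)) (Set.range hullVertex)
  have hconv : IsGeoConvex _ hull := isGeoConvex_geoHull _
  have hv : ∀ k, v k ∈ hull := fun k =>
    subset_geoHull _ ⟨Fin.castLE hn k, by simpa [hullVertex] using k.is_le⟩
  have hgeodesic : ∀ {x y}, (compPrism (pendantGraph n)).Adj (v 0) x →
      (compPrism (pendantGraph n)).Adj x y → (compPrism (pendantGraph n)).Adj y (v 1) →
      x ∈ hull ∧ y ∈ hull := fun h₁ h₂ h₃ =>
    (mem_geoInterval_of_adj_adj_adj hG h₁ h₂ h₃ (three_le_dist_v_v hn)).imp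
      (hconv _ (hv 0) _ (hv 1) ·) (hconv _ (hv 0) _ (hv 1) ·)
  have hu : ∀ j, u j ∈ hull := by
    obtain ⟨hu₀, hu₁⟩ := hgeodesic (x := u (Fin.castLE hn 0)) (y := u (Fin.castLE hn 1))
      (by simp) (by simp [Fin.ext_iff]) (by simp)
    intro j
    by_cases hj : (j : ℕ) < 2
    · obtain h | h : (j : ℕ) = 0 ∨ (j : ℕ) = 1 := by omega
      · exact (Fin.ext h : j = Fin.castLE hn 0) ▸ hu₀
      · exact (Fin.ext h : j = Fin.castLE hn 1) ▸ hu₁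
    · exact subset_geoHull _ ⟨j, by simp [hullVertex, hj]⟩
  have hvBar : ∀ k, vBar k ∈ hull := by
    obtain ⟨hv₀, hv₁⟩ := hgeodesic (x := vBar 0) (y := vBar 1) (by simp) (by simp) (by simp)
    intro k
    fin_cases k
    exacts [hv₀, hv₁]
  have huBar : ∀ j, uBar j ∈ hull := by
    intro j
    obtain ⟨k, hk⟩ : ∃ k : Fin 2, (j : ℕ) ≠ k :=
      ⟨if (j : ℕ) = 0 then 1 else 0, by split_ifs <;> simp_all⟩
    refine hconv _ (hu j) _ (hvBar k) (mem_geoInterval_of_adj_adj hG (by simp) (by simp [hk]) ?_)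
    exact hG.one_lt_dist_of_ne_of_not_adj (by simp) (by simp)
  refine Set.eq_univ_iff_forall.mpr ?_
  rintro ((j | k) | (j | k))
  exacts [hu j, hv k, huBar j, hvBar k]

lemma le_ncard_of_isHullSet (hn : 2 ≤ n) {S : Set ((Fin n ⊕ Fin 2) ⊕ (Fin n ⊕ Fin 2))}
    (hS : IsHullSet (compPrism (pendantGraph n)) S) : n ≤ S.ncard := by
  have hcard : (Set.range (some ∘ Fin.val : Fin n → Option ℕ)).ncard = n := by
    rw [Set.ncard_range_of_injective (Option.some_injective _ |>.comp Fin.val_injective),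
      Nat.card_fin]
  refine hcard.ge.trans (hS.ncard_le (f := fiberIndex) ?_)
  rintro _ ⟨i, rfl⟩
  exact ⟨⟨u i, rfl⟩, isGeoConvex_compl_fiber hn i⟩

lemma hullNumber_eq (hn : 2 ≤ n) : hullNumber (compPrism (pendantGraph n)) = n :=
  hullNumber_eq_of_isHullSet (isHullSet_range_hullVertex hn) ncard_range_hullVertex
    fun _ => le_ncard_of_isHullSet hn

end PendantPrism

theorem hullNumber_compPrism_unbounded :
    (∀ n : ℕ, 2 ≤ n → ∃ (V : Type) (_ : Fintype V) (G : SimpleGraph V),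
      G.Connected ∧ Gᶜ.Connected ∧ hullNumber (compPrism G) = n) ∧
    (∀ n : ℕ, 3 ≤ n → (pendantGraph n).Connected ∧ (pendantGraph n)ᶜ.Connected ∧
      hullNumber (compPrism (pendantGraph n)) = n) := by
  have hpendant : ∀ n, 2 ≤ n → (pendantGraph n).Connected ∧ (pendantGraph n)ᶜ.Connected ∧
      hullNumber (compPrism (pendantGraph n)) = n := fun n hn =>
    ⟨PendantGraph.connected hn, PendantGraph.compl_connected, PendantPrism.hullNumber_eq hn⟩
  exact ⟨fun n hn => ⟨_, inferInstance, pendantGraph n, hpendant n hn⟩,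
    fun n hn => hpendant n (by omega)⟩
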